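/- arXiv:1807.09554 — 9 statements merged into one kernel-verified Lean document; each statement's English description precedes it below -/
import Mathlib

section
/- Let 𝒞 be a category, T : 𝒞 ⥤ 𝒞 an endofunctor, p : T ⟶ 𝟭 and c : T∘T ⟶ T∘T natural transformations satisfying, for every object N, the tangent-category compatibilities c_N ≫ T(p_N) = p_{TN} and c_N ≫ p_{TN} = T(p_N). Then for every object M and every morphism K : T²M ⟶ TM, the lift K_T := T(c_M) ≫ c_{TM} ≫ T(K) ≫ c_M : T³M ⟶ T²M satisfies K_T ≫ T(p_M) = T(T(p_M)) ≫ K. (Lemma 5.19(i): K_T·T(p) = T²(p)·K.) -/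
open CategoryTheory

/-- Lemma 5.19(i): `K_T ≫ T(p_M) = T²(p_M) ≫ K`. -/
theorem stmt_0 {C : Type*} [Category C] (T : C ⥤ C)
    (p : T ⟶ 𝟭 C) (c : T ⋙ T ⟶ T ⋙ T)
    (hc_p1 : ∀ N : C, c.app N ≫ T.map (p.app N) = p.app (T.obj N))
    (hc_p2 : ∀ N : C, c.app N ≫ p.app (T.obj N) = T.map (p.app N))
    (M : C) (K : T.obj (T.obj M) ⟶ T.obj M) :
    (T.map (c.app M) ≫ c.app (T.obj M) ≫ T.map K ≫ c.app M) ≫ T.map (p.app M)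
      = T.map (T.map (p.app M)) ≫ K := by
  calc (T.map (c.app M) ≫ c.app (T.obj M) ≫ T.map K ≫ c.app M) ≫ T.map (p.app M)
      _ = T.map (c.app M) ≫ c.app (T.obj M) ≫ T.map K ≫ p.app (T.obj M) := by
        simp only [Category.assoc, hc_p1]
      _ = T.map (c.app M) ≫ c.app (T.obj M) ≫ p.app (T.obj (T.obj M)) ≫ K := by
        rw [p.naturality K, Functor.id_map]
      _ = T.map (c.app M) ≫ T.map (p.app (T.obj M)) ≫ K := by
        rw [reassoc_of% hc_p2 (T.obj M)]
      _ = T.map (T.map (p.app M)) ≫ K := by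
        rw [← T.map_comp_assoc, hc_p2]
end

section
/- Let 𝒞 be a category, T : 𝒞 ⥤ 𝒞 an endofunctor, ℓ : T ⟶ T∘T and c : T∘T ⟶ T∘T natural transformations with ℓ_M ≫ c_M = ℓ_M. Let M be an object and K : T²M ⟶ TM a morphism satisfying the linearity equation K ≫ ℓ_M = T(ℓ_M) ≫ c_{TM} ≫ T(K). Then the lift K_T := T(c_M) ≫ c_{TM} ≫ T(K) ≫ c_M satisfies T(ℓ_M) ≫ K_T = K ≫ ℓ_M. (Lemma 5.19(ii): T(ℓ)·K_T = K·ℓ.) -/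
open CategoryTheory

namespace CategoryTheory

variable {C : Type*} [Category C] {T : C ⥤ C}

def connectionLift (c : T ⋙ T ⟶ T ⋙ T) {M : C} (K : T.obj (T.obj M) ⟶ T.obj M) :
    T.obj (T.obj (T.obj M)) ⟶ T.obj (T.obj M) :=
  T.map (c.app M) ≫ c.app (T.obj M) ≫ T.map K ≫ c.app M

theorem map_app_comp_connectionLift (l : T ⟶ T ⋙ T) (c : T ⋙ T ⟶ T ⋙ T) {M : C}
    (hlc : l.app M ≫ c.app M = l.app M) {K : T.obj (T.obj M) ⟶ T.obj M}
    (hK : K ≫ l.app M = T.map (l.app M) ≫ c.app (T.obj M) ≫ T.map K) :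
    T.map (l.app M) ≫ connectionLift c K = K ≫ l.app M := by
  have hlc' : T.map (l.app M) ≫ T.map (c.app M) = T.map (l.app M) := by
    rw [← T.map_comp, hlc]
  calc T.map (l.app M) ≫ connectionLift c K
      = (T.map (l.app M) ≫ c.app (T.obj M) ≫ T.map K) ≫ c.app M := by
        simp only [connectionLift, reassoc_of% hlc', Category.assoc]
    _ = K ≫ l.app M := by rw [← hK, Category.assoc, hlc]

end CategoryTheory

/-- Lemma 5.19(ii): `T(ℓ_M) ≫ K_T = K ≫ ℓ_M`. -/
theorem stmt_1 {C : Type*} [Category C] (T : C ⥤ C)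
    (l : T ⟶ T ⋙ T) (c : T ⋙ T ⟶ T ⋙ T)
    (M : C)
    (hlc : l.app M ≫ c.app M = l.app M)
    (K : T.obj (T.obj M) ⟶ T.obj M)
    (hKlin : K ≫ l.app M = T.map (l.app M) ≫ c.app (T.obj M) ≫ T.map K) :
    T.map (l.app M) ≫ (T.map (c.app M) ≫ c.app (T.obj M) ≫ T.map K ≫ c.app M)
      = K ≫ l.app M :=
  map_app_comp_connectionLift l c hlc hKlin
end

section
/- Let 𝒞 be a category, T : 𝒞 ⥤ 𝒞 an endofunctor, ℓ : T ⟶ T∘T and c : T∘T ⟶ T∘T natural transformations satisfying c_M ≫ c_M = 𝟙, ℓ_M ≫ c_M = ℓ_M, ℓ_{TM} ≫ c_{TM} = ℓ_{TM}, and the coherence T(ℓ_M) ≫ c_{TM} ≫ T(c_M) ≫ c_{TM} = c_M ≫ ℓ_{TM} ≫ c_{TM} (all of which hold in any tangent category). Let K : T²M ⟶ TM be a morphism satisfying ℓ_M ≫ K = 𝟙_{TM}, K ≫ ℓ_M = ℓ_{TM} ≫ T(K), and K ≫ ℓ_M = T(ℓ_M) ≫ c_{TM} ≫ T(K) (the retraction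 and linearity properties of a vertical connection). Then the following are equivalent: (i) K is flat and torsion-free, i.e. c_M ≫ K = K and c_{TM} ≫ T(K) ≫ K = T(K) ≫ K; (ii) K_T ≫ K = T(K) ≫ K, where K_T := T(c_M) ≫ c_{TM} ≫ T(K) ≫ c_M is the lift of K. (Theorem 5.20, equivalence (i) ⇔ (ii).) -/
/-!
Torsion-freeness is recovered from `K_T ≫ K = T(K) ≫ K` by precomposing with `T(ℓ) ≫ c_T`:
the coherence of `ℓ` with `c` and the linearity of `K` reduce the left side to `c ≫ K` and
the right side to `K`. Flatness then follows by precomposing with `T(c)`, since `c` is an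
involution, and the converse direction is a direct rewrite.
-/

open CategoryTheory

namespace VerticalConnection

variable {C : Type*} [Category C] {T : C ⥤ C} {M : C}

section

variable (c : T ⋙ T ⟶ T ⋙ T) (K : T.obj (T.obj M) ⟶ T.obj M)

def lift : T.obj (T.obj (T.obj M)) ⟶ T.obj (T.obj M) :=
  T.map (c.app M) ≫ c.app (T.obj M) ≫ T.map K ≫ c.app M

def IsTorsionFree : Prop := c.app M ≫ K = K

def IsFlat : Prop := c.app (T.obj M) ≫ T.map K ≫ K = T.map K ≫ K

variable {c K}

theorem IsTorsionFree.map_flip_comp_map (htf : IsTorsionFree c K) :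
    T.map (c.app M) ≫ T.map K = T.map K := by
  rw [← T.map_comp, htf]

theorem lift_comp_eq_of_isTorsionFree_of_isFlat (htf : IsTorsionFree c K) (hflat : IsFlat c K) :
    lift c K ≫ K = T.map K ≫ K := by
  simp only [lift, Category.assoc]
  rw [htf, hflat, reassoc_of% htf.map_flip_comp_map]

theorem isFlat_of_lift_comp_eq (hcc : c.app M ≫ c.app M = 𝟙 (T.obj (T.obj M)))
    (htf : IsTorsionFree c K) (H : lift c K ≫ K = T.map K ≫ K) : IsFlat c K := by
  have H' : T.map (c.app M) ≫ c.app (T.obj M) ≫ T.map K ≫ K = T.map K ≫ K := by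
    simpa only [lift, Category.assoc, show c.app M ≫ K = K from htf] using H
  calc c.app (T.obj M) ≫ T.map K ≫ K
      = T.map (c.app M ≫ c.app M) ≫ c.app (T.obj M) ≫ T.map K ≫ K := by simp [hcc]
    _ = T.map K ≫ K := by rw [T.map_comp, Category.assoc, H', reassoc_of% htf.map_flip_comp_map]

end

variable {l : T ⟶ T ⋙ T} {c : T ⋙ T ⟶ T ⋙ T} {K : T.obj (T.obj M) ⟶ T.obj M}

theorem map_vertical_comp_flip_comp_map_comp_eq (hretr : l.app M ≫ K = 𝟙 (T.obj M))
    (hlin2 : K ≫ l.app M = T.map (l.app M) ≫ c.app (T.obj M) ≫ T.map K) :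
    T.map (l.app M) ≫ c.app (T.obj M) ≫ T.map K ≫ K = K := by
  rw [← reassoc_of% hlin2, hretr, Category.comp_id]

theorem map_vertical_comp_flip_comp_lift_comp_eq (hlc : l.app M ≫ c.app M = l.app M)
    (hlcT : l.app (T.obj M) ≫ c.app (T.obj M) = l.app (T.obj M))
    (hcoh : T.map (l.app M) ≫ c.app (T.obj M) ≫ T.map (c.app M) ≫ c.app (T.obj M)
      = c.app M ≫ l.app (T.obj M) ≫ c.app (T.obj M))
    (hretr : l.app M ≫ K = 𝟙 (T.obj M))
    (hlin1 : K ≫ l.app M = l.app (T.obj M) ≫ T.map K) :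
    T.map (l.app M) ≫ c.app (T.obj M) ≫ lift c K ≫ K = c.app M ≫ K := by
  simp only [lift, Category.assoc]
  rw [reassoc_of% hcoh, reassoc_of% hlcT, ← reassoc_of% hlin1, reassoc_of% hlc, hretr,
    Category.comp_id]

theorem isTorsionFree_and_isFlat_iff (hcc : c.app M ≫ c.app M = 𝟙 (T.obj (T.obj M)))
    (hlc : l.app M ≫ c.app M = l.app M)
    (hlcT : l.app (T.obj M) ≫ c.app (T.obj M) = l.app (T.obj M))
    (hcoh : T.map (l.app M) ≫ c.app (T.obj M) ≫ T.map (c.app M) ≫ c.app (T.obj M)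
      = c.app M ≫ l.app (T.obj M) ≫ c.app (T.obj M))
    (hretr : l.app M ≫ K = 𝟙 (T.obj M))
    (hlin1 : K ≫ l.app M = l.app (T.obj M) ≫ T.map K)
    (hlin2 : K ≫ l.app M = T.map (l.app M) ≫ c.app (T.obj M) ≫ T.map K) :
    IsTorsionFree c K ∧ IsFlat c K ↔ lift c K ≫ K = T.map K ≫ K := by
  refine ⟨fun ⟨htf, hflat⟩ => lift_comp_eq_of_isTorsionFree_of_isFlat htf hflat, fun H => ?_⟩
  have htf : IsTorsionFree c K := by
    have := map_vertical_comp_flip_comp_lift_comp_eq hlc hlcT hcoh hretr hlin1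
    rwa [H, map_vertical_comp_flip_comp_map_comp_eq hretr hlin2, eq_comm] at this
  exact ⟨htf, isFlat_of_lift_comp_eq hcc htf H⟩

end VerticalConnection

/-- Theorem 5.20, equivalence (i) ⇔ (ii): `K` is flat and torsion-free iff `K_T ≫ K = T(K) ≫ K`. -/
theorem stmt_2 {C : Type*} [Category C] (T : C ⥤ C)
    (l : T ⟶ T ⋙ T) (c : T ⋙ T ⟶ T ⋙ T) (M : C)
    (hcc : c.app M ≫ c.app M = 𝟙 (T.obj (T.obj M)))
    (hlc : l.app M ≫ c.app M = l.app M)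
    (hlcT : l.app (T.obj M) ≫ c.app (T.obj M) = l.app (T.obj M))
    (hcoh : T.map (l.app M) ≫ c.app (T.obj M) ≫ T.map (c.app M) ≫ c.app (T.obj M)
      = c.app M ≫ l.app (T.obj M) ≫ c.app (T.obj M))
    (K : T.obj (T.obj M) ⟶ T.obj M)
    (hretr : l.app M ≫ K = 𝟙 (T.obj M))
    (hlin1 : K ≫ l.app M = l.app (T.obj M) ≫ T.map K)
    (hlin2 : K ≫ l.app M = T.map (l.app M) ≫ c.app (T.obj M) ≫ T.map K) :
    (c.app M ≫ K = K ∧ c.app (T.obj M) ≫ T.map K ≫ K = T.map K ≫ K)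
      ↔ (T.map (c.app M) ≫ c.app (T.obj M) ≫ T.map K ≫ c.app M) ≫ K = T.map K ≫ K :=
  VerticalConnection.isTorsionFree_and_isFlat_iff hcc hlc hlcT hcoh hretr hlin1 hlin2
end

section
/- Let 𝒞 be a category, T : 𝒞 ⥤ 𝒞 an endofunctor, ℓ : T ⟶ T∘T and c : T∘T ⟶ T∘T natural transformations, M an object, and K : T²M ⟶ TM a morphism. Let K_T := T(c_M) ≫ c_{TM} ≫ T(K) ≫ c_M and K_{T²} := T(c_{TM}) ≫ c_{T²M} ≫ T(K_T) ≫ c_{TM} be the lifts of K and of K_T. Assume: ℓ_M ≫ K = 𝟙_{TM}; K ≫ ℓ_M = ℓ_{TM} ≫ T(K); T(ℓ_M) ≫ K_T = K ≫ ℓ_M; and T(ℓ_{TM}) ≫ K_{T²} = K_T ≫ ℓ_{TM} (the last two being instances of Lemma 5.19(ii)). If T²(K) ≫ K_T = K_{T²} ≫ T(K), then K_T ≫ K = T(K) ≫ K. (Theorem 5.20, implication (iii) ⇒ (ii).) -/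
/-!
Since `ℓ_M ≫ K = 𝟙`, the vertical lift `ℓ_M` is a split monomorphism, so it suffices to prove the
identity after post-composing with `ℓ_M`. Linearity of `K` and the compatibility of `K_T` and
`K_{T²}` with `ℓ` turn `T(K) ≫ K ≫ ℓ_M` into `T(ℓ_{TM}) ≫ T²(K) ≫ K_T`, and, after applying
`T²(K) ≫ K_T = K_{T²} ≫ T(K)`, into `K_T ≫ K ≫ ℓ_M`.
-/

open CategoryTheory

theorem map_comp_comp_app_eq_comp_comp_app {C : Type*} [Category C] (T : C ⥤ C)
    (l : T ⟶ T ⋙ T) (M : C) (K : T.obj (T.obj M) ⟶ T.obj M)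
    (KT : T.obj (T.obj (T.obj M)) ⟶ T.obj (T.obj M))
    (KT2 : T.obj (T.obj (T.obj (T.obj M))) ⟶ T.obj (T.obj (T.obj M)))
    (hlin : K ≫ l.app M = l.app (T.obj M) ≫ T.map K)
    (hKTl : T.map (l.app M) ≫ KT = K ≫ l.app M)
    (hKT2l : T.map (l.app (T.obj M)) ≫ KT2 = KT ≫ l.app (T.obj M))
    (hpres : T.map (T.map K) ≫ KT = KT2 ≫ T.map K) :
    T.map K ≫ K ≫ l.app M = KT ≫ K ≫ l.app M :=
  calc T.map K ≫ K ≫ l.app M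
      = T.map (K ≫ l.app M) ≫ KT := by rw [T.map_comp, Category.assoc, hKTl]
    _ = T.map (l.app (T.obj M)) ≫ T.map (T.map K) ≫ KT := by rw [hlin, T.map_comp, Category.assoc]
    _ = KT ≫ l.app (T.obj M) ≫ T.map K := by rw [hpres, reassoc_of% hKT2l]
    _ = KT ≫ K ≫ l.app M := by rw [hlin]

theorem stmt_3_general {C : Type*} [Category C] (T : C ⥤ C)
    (l : T ⟶ T ⋙ T) (M : C)
    (K : T.obj (T.obj M) ⟶ T.obj M)
    -- the lifts of K and of K_T
    (KT : T.obj (T.obj (T.obj M)) ⟶ T.obj (T.obj M))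
    (KT2 : T.obj (T.obj (T.obj (T.obj M))) ⟶ T.obj (T.obj (T.obj M)))
    (hretr : l.app M ≫ K = 𝟙 (T.obj M))
    (hlin : K ≫ l.app M = l.app (T.obj M) ≫ T.map K)
    (hKTl : T.map (l.app M) ≫ KT = K ≫ l.app M)
    (hKT2l : T.map (l.app (T.obj M)) ≫ KT2 = KT ≫ l.app (T.obj M))
    (hpres : T.map (T.map K) ≫ KT = KT2 ≫ T.map K) :
    KT ≫ K = T.map K ≫ K := by
  have : IsSplitMono (l.app M) := IsSplitMono.mk' ⟨K, hretr⟩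
  rw [← cancel_mono (l.app M), Category.assoc, Category.assoc]
  exact (map_comp_comp_app_eq_comp_comp_app T l M K KT KT2 hlin hKTl hKT2l hpres).symm

/-- Theorem 5.20, implication (iii) ⇒ (ii). -/
theorem stmt_3 {C : Type*} [Category C] (T : C ⥤ C)
    (l : T ⟶ T ⋙ T) (c : T ⋙ T ⟶ T ⋙ T) (M : C)
    (K : T.obj (T.obj M) ⟶ T.obj M)
    -- the lifts of K and of K_T
    (KT : T.obj (T.obj (T.obj M)) ⟶ T.obj (T.obj M))
    (hKT : KT = T.map (c.app M) ≫ c.app (T.obj M) ≫ T.map K ≫ c.app M)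
    (KT2 : T.obj (T.obj (T.obj (T.obj M))) ⟶ T.obj (T.obj (T.obj M)))
    (hKT2 : KT2 = T.map (c.app (T.obj M)) ≫ c.app (T.obj (T.obj M)) ≫ T.map KT ≫ c.app (T.obj M))
    (hretr : l.app M ≫ K = 𝟙 (T.obj M))
    (hlin : K ≫ l.app M = l.app (T.obj M) ≫ T.map K)
    (hKTl : T.map (l.app M) ≫ KT = K ≫ l.app M)
    (hKT2l : T.map (l.app (T.obj M)) ≫ KT2 = KT ≫ l.app (T.obj M))
    (hpres : T.map (T.map K) ≫ KT = KT2 ≫ T.map K) :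
    KT ≫ K = T.map K ≫ K :=
  stmt_3_general T l M K KT KT2 hretr hlin hKTl hKT2l hpres
end

section
/- Let 𝒞 be a category, T : 𝒞 ⥤ 𝒞 an endofunctor, p : T ⟶ 𝟭 and c : T∘T ⟶ T∘T natural transformations, M an object, and K : T²M ⟶ TM a morphism, with lifts K_T := T(c_M) ≫ c_{TM} ≫ T(K) ≫ c_M and K_{T²} := T(c_{TM}) ≫ c_{T²M} ≫ T(K_T) ≫ c_{TM}. Assume: (a) K_T ≫ K = T(K) ≫ K and K_{T²} ≫ K_T = T(K_T) ≫ K_T; (b) K_T ≫ T(p_M) = T²(p_M) ≫ K and K_{T²} ≫ T(p_{TM}) = T²(p_{TM}) ≫ K_T (instances of Lemma 5.19(i)); (c) the bundle equations K ≫ p_M = p_{TM} ≫ p_M, K_T ≫ p_{TM} = p_{T²M} ≫ p_{TM}, and K_{T²} ≫ p_{T²M} = p_{T³M} ≫ p_{T²M}; (d) the three morphisms K, T(p_M), p_{TM} : T²M ⟶ TM are jointly monic (as they are when T²M is the fibre product of three copies of p_M : TM ⟶ M with these projections). Then K_{T²} ≫ T(K) = T²(K) ≫ K_T, i.e. K is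 a connection-preserving map from (T²M, K_{T²}) to (TM, K_T). (Theorem 5.20, implication (i) ⇒ (iii), in the form used in the proof.) -/
/-!
Both sides of `K_{T²} ≫ T(K) = T²(K) ≫ K_T` are maps into `T²M`, so by (d) it suffices to compare
their composites with `K`, `T(p_M)` and `p_{TM}`. Against `K` both reduce to `T²(K) ≫ T(K) ≫ K`
using the two associativity laws (a); against `T(p_M)` both reduce to `T²(p_{TM} ≫ p_M) ≫ K` using (b)
and the first bundle equation; against `p_{TM}` both reduce to `p_{T³M} ≫ p_{T²M} ≫ K` by naturality
of `p` and the bundle equations.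
-/

open CategoryTheory

section

variable {C : Type*} [Category C] (T : C ⥤ C)

theorem comp_map_comp_eq_of_assoc {B : C} {K : T.obj B ⟶ B} {KT : T.obj (T.obj B) ⟶ T.obj B}
    {L : T.obj (T.obj (T.obj B)) ⟶ T.obj (T.obj B)}
    (hK : KT ≫ K = T.map K ≫ K) (hL : L ≫ KT = T.map KT ≫ KT) :
    L ≫ T.map K ≫ K = T.map (T.map K) ≫ KT ≫ K :=
  calc L ≫ T.map K ≫ K = T.map KT ≫ KT ≫ K := by rw [← hK, reassoc_of% hL]
    _ = T.map (KT ≫ K) ≫ K := by rw [T.map_comp_assoc, hK]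
    _ = T.map (T.map K) ≫ KT ≫ K := by rw [hK, T.map_comp_assoc]

theorem comp_map_comp_proj_eq_of_proj (p : T ⟶ 𝟭 C) {X Y : C} (f : X ⟶ Y)
    {L : T.obj (T.obj X) ⟶ T.obj X} {L' : T.obj (T.obj Y) ⟶ T.obj Y}
    (hL : L ≫ p.app X = p.app (T.obj X) ≫ p.app X)
    (hL' : L' ≫ p.app Y = p.app (T.obj Y) ≫ p.app Y) :
    L ≫ T.map f ≫ p.app Y = T.map (T.map f) ≫ L' ≫ p.app Y := by
  have hp : ∀ {A B : C} (g : A ⟶ B), T.map g ≫ p.app B = p.app A ≫ g := fun g => p.naturality g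
  calc L ≫ T.map f ≫ p.app Y = p.app (T.obj X) ≫ p.app X ≫ f := by rw [hp, reassoc_of% hL]
    _ = T.map (T.map f) ≫ L' ≫ p.app Y := by rw [hL', reassoc_of% (hp (T.map f)), hp]

theorem comp_map_comp_map_proj_eq (p : T ⟶ 𝟭 C) {M : C} {K : T.obj (T.obj M) ⟶ T.obj M}
    {KT : T.obj (T.obj (T.obj M)) ⟶ T.obj (T.obj M)}
    {L : T.obj (T.obj (T.obj (T.obj M))) ⟶ T.obj (T.obj (T.obj M))}
    (hK : K ≫ p.app M = p.app (T.obj M) ≫ p.app M)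
    (hKT : KT ≫ T.map (p.app M) = T.map (T.map (p.app M)) ≫ K)
    (hL : L ≫ T.map (p.app (T.obj M)) = T.map (T.map (p.app (T.obj M))) ≫ KT) :
    L ≫ T.map K ≫ T.map (p.app M) = T.map (T.map K) ≫ KT ≫ T.map (p.app M) :=
  calc L ≫ T.map K ≫ T.map (p.app M)
      = L ≫ T.map (p.app (T.obj M)) ≫ T.map (p.app M) := by rw [← T.map_comp, hK, T.map_comp]
    _ = T.map (T.map (p.app (T.obj M) ≫ p.app M)) ≫ K := by
      rw [reassoc_of% hL, hKT, T.map_comp, T.map_comp_assoc]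
    _ = T.map (T.map K) ≫ KT ≫ T.map (p.app M) := by
      rw [← hK, T.map_comp, T.map_comp_assoc, hKT]

end

theorem stmt_4_general {C : Type*} [Category C] (T : C ⥤ C)
    (p : T ⟶ 𝟭 C) (M : C)
    (K : T.obj (T.obj M) ⟶ T.obj M)
    (KT : T.obj (T.obj (T.obj M)) ⟶ T.obj (T.obj M))
    (KT2 : T.obj (T.obj (T.obj (T.obj M))) ⟶ T.obj (T.obj (T.obj M)))
    -- (a)
    (ha1 : KT ≫ K = T.map K ≫ K)
    (ha2 : KT2 ≫ KT = T.map KT ≫ KT)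
    -- (b) instances of Lemma 5.19(i)
    (hb1 : KT ≫ T.map (p.app M) = T.map (T.map (p.app M)) ≫ K)
    (hb2 : KT2 ≫ T.map (p.app (T.obj M)) = T.map (T.map (p.app (T.obj M))) ≫ KT)
    -- (c) bundle equations
    (hc1 : K ≫ p.app M = p.app (T.obj M) ≫ p.app M)
    (hc2 : KT ≫ p.app (T.obj M) = p.app (T.obj (T.obj M)) ≫ p.app (T.obj M))
    (hc3 : KT2 ≫ p.app (T.obj (T.obj M)) = p.app (T.obj (T.obj (T.obj M))) ≫ p.app (T.obj (T.obj M)))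
    -- (d) joint monicity of K, T(p_M), p_{TM}
    (hd : ∀ (X : C) (u v : X ⟶ T.obj (T.obj M)),
      u ≫ K = v ≫ K → u ≫ T.map (p.app M) = v ≫ T.map (p.app M) →
      u ≫ p.app (T.obj M) = v ≫ p.app (T.obj M) → u = v) :
    KT2 ≫ T.map K = T.map (T.map K) ≫ KT := by
  apply hd <;> simp only [Category.assoc]
  · exact comp_map_comp_eq_of_assoc T ha1 ha2
  · exact comp_map_comp_map_proj_eq T p hc1 hb1 hb2
  · exact comp_map_comp_proj_eq_of_proj T p K hc3 hc2

/-- Theorem 5.20, implication (i) ⇒ (iii), in the form used in the proof. -/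
theorem stmt_4 {C : Type*} [Category C] (T : C ⥤ C)
    (p : T ⟶ 𝟭 C) (c : T ⋙ T ⟶ T ⋙ T) (M : C)
    (K : T.obj (T.obj M) ⟶ T.obj M)
    (KT : T.obj (T.obj (T.obj M)) ⟶ T.obj (T.obj M))
    (hKT : KT = T.map (c.app M) ≫ c.app (T.obj M) ≫ T.map K ≫ c.app M)
    (KT2 : T.obj (T.obj (T.obj (T.obj M))) ⟶ T.obj (T.obj (T.obj M)))
    (hKT2 : KT2 = T.map (c.app (T.obj M)) ≫ c.app (T.obj (T.obj M)) ≫ T.map KT ≫ c.app (T.obj M))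
    -- (a)
    (ha1 : KT ≫ K = T.map K ≫ K)
    (ha2 : KT2 ≫ KT = T.map KT ≫ KT)
    -- (b) instances of Lemma 5.19(i)
    (hb1 : KT ≫ T.map (p.app M) = T.map (T.map (p.app M)) ≫ K)
    (hb2 : KT2 ≫ T.map (p.app (T.obj M)) = T.map (T.map (p.app (T.obj M))) ≫ KT)
    -- (c) bundle equations
    (hc1 : K ≫ p.app M = p.app (T.obj M) ≫ p.app M)
    (hc2 : KT ≫ p.app (T.obj M) = p.app (T.obj (T.obj M)) ≫ p.app (T.obj M))
    (hc3 : KT2 ≫ p.app (T.obj (T.obj M)) = p.app (T.obj (T.obj (T.obj M))) ≫ p.app (T.obj (T.obj M)))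
    -- (d) joint monicity of K, T(p_M), p_{TM}
    (hd : ∀ (X : C) (u v : X ⟶ T.obj (T.obj M)),
      u ≫ K = v ≫ K → u ≫ T.map (p.app M) = v ≫ T.map (p.app M) →
      u ≫ p.app (T.obj M) = v ≫ p.app (T.obj M) → u = v) :
    KT2 ≫ T.map K = T.map (T.map K) ≫ KT :=
  stmt_4_general T p M K KT KT2 ha1 ha2 hb1 hb2 hc1 hc2 hc3 hd
end

section
/- Let 𝒞 and 𝒟 be categories, T : 𝒞 ⥤ 𝒞 and S : 𝒟 ⥤ 𝒟 endofunctors, F : 𝒞 ⥤ 𝒟 a functor, α a natural isomorphism with components α_N : F(TN) ≅ S(FN), and c : T∘T ⟶ T∘T, c' : S∘S ⟶ S∘S natural transformations satisfying, for every object N of 𝒞, F(c_N) ≫ α^{[2]}_N = α^{[2]}_N ≫ c'_{FN}, where α^{[2]}_N := α_{TN} ≫ S(α_N) : F(T²N) ⟶ S²(FN). Let M be an object of 𝒞, K : T²M ⟶ TM a morphism, and K_F := (α^{[2]}_M)⁻¹ ≫ F(K) ≫ α_M : S²(FM) ⟶ S(FM). Then: (1) if K is torsion-free (c_M ≫ K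 = K) then K_F is torsion-free (c'_{FM} ≫ K_F = K_F); (2) if K is flat (c_{TM} ≫ T(K) ≫ K = T(K) ≫ K) then K_F is flat (c'_{S(FM)} ≫ S(K_F) ≫ K_F = S(K_F) ≫ K_F). (Proposition 5.7: a strong morphism of tangent categories preserves torsion-freeness and flatness of connections.) -/
open CategoryTheory

/-!
Transporting along `F` is conjugation by the isomorphisms `α^{[2]}_M` and `α_M`. The flip
compatibility says that `α^{[2]}` also conjugates `F(c)` into `c'`, so the torsion equation for `K`
is carried to the one for `K_F`. For flatness one conjugates by the threefold composite
`α^{[3]}_M := α_{T²M} ≫ S(α^{[2]}_M)`: it turns `F(T K ≫ K)` into `S(K_F) ≫ K_F` and, by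
naturality of `c'`, `F(c_{TM})` into `c'_{S(FM)}`.
-/

namespace CategoryTheory

lemma Iso.comp_inv_comp_eq_of_comp_eq {A : Type*} [Category A] {X X' Z : A}
    (e : X ≅ X') {f : X ⟶ X} {g : X' ⟶ X'} (hfg : f ≫ e.hom = e.hom ≫ g)
    {h : X ⟶ Z} (hh : f ≫ h = h) : g ≫ e.inv ≫ h = e.inv ≫ h := by
  have hgf : g ≫ e.inv = e.inv ≫ f := by
    rw [Iso.comp_inv_eq, Category.assoc, hfg, Iso.inv_hom_id_assoc]
  rw [reassoc_of% hgf, hh]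

end CategoryTheory

namespace TangentConnection

variable {C D : Type*} [Category C] [Category D] {T : C ⥤ C} {S : D ⥤ D} {F : C ⥤ D}

def IsTorsionFree (c : T ⋙ T ⟶ T ⋙ T) {M : C} (K : T.obj (T.obj M) ⟶ T.obj M) : Prop :=
  c.app M ≫ K = K

def IsFlat (c : T ⋙ T ⟶ T ⋙ T) {M : C} (K : T.obj (T.obj M) ⟶ T.obj M) : Prop :=
  c.app (T.obj M) ≫ T.map K ≫ K = T.map K ≫ K

/-- The paper's `α^{[2]}_N`. -/
def doubleApp (α : T ⋙ F ≅ F ⋙ S) (N : C) : F.obj (T.obj (T.obj N)) ≅ S.obj (S.obj (F.obj N)) :=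
  α.app (T.obj N) ≪≫ S.mapIso (α.app N)

def tripleApp (α : T ⋙ F ≅ F ⋙ S) (N : C) :
    F.obj (T.obj (T.obj (T.obj N))) ≅ S.obj (S.obj (S.obj (F.obj N))) :=
  α.app (T.obj (T.obj N)) ≪≫ S.mapIso (doubleApp α N)

/-- The paper's `K_F`. -/
def transport (α : T ⋙ F ≅ F ⋙ S) {M : C} (K : T.obj (T.obj M) ⟶ T.obj M) :
    S.obj (S.obj (F.obj M)) ⟶ S.obj (F.obj M) :=
  (doubleApp α M).inv ≫ F.map K ≫ α.hom.app M

variable (α : T ⋙ F ≅ F ⋙ S) {c : T ⋙ T ⟶ T ⋙ T} {c' : S ⋙ S ⟶ S ⋙ S}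

lemma tripleApp_hom_eq (N : C) :
    (tripleApp α N).hom = (doubleApp α (T.obj N)).hom ≫ S.map (S.map (α.hom.app N)) := by
  simp [tripleApp, doubleApp]

lemma map_flip_comp_tripleApp_hom
    (hflip : ∀ N : C,
      F.map (c.app N) ≫ (doubleApp α N).hom = (doubleApp α N).hom ≫ c'.app (F.obj N))
    (N : C) :
    F.map (c.app (T.obj N)) ≫ (tripleApp α N).hom =
      (tripleApp α N).hom ≫ c'.app (S.obj (F.obj N)) := by
  rw [tripleApp_hom_eq, reassoc_of% hflip (T.obj N), Category.assoc]
  exact congrArg _ (c'.naturality (α.hom.app N)).symm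

lemma map_transport_comp_transport {M : C} (K : T.obj (T.obj M) ⟶ T.obj M) :
    S.map (transport α K) ≫ transport α K =
      (tripleApp α M).inv ≫ F.map (T.map K ≫ K) ≫ α.hom.app M := by
  have hnat : S.map (F.map K) ≫ α.inv.app (T.obj M) =
      α.inv.app (T.obj (T.obj M)) ≫ F.map (T.map K) := α.inv.naturality K
  simp only [transport, tripleApp, doubleApp, Iso.trans_inv, Functor.mapIso_inv, Iso.app_inv,
    Functor.map_comp, Category.assoc]
  rw [← S.map_comp_assoc (α.hom.app M), Iso.hom_inv_id_app, S.map_id, Category.id_comp,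
    reassoc_of% hnat]

variable {α}

lemma IsTorsionFree.transport
    (hflip : ∀ N : C,
      F.map (c.app N) ≫ (doubleApp α N).hom = (doubleApp α N).hom ≫ c'.app (F.obj N))
    {M : C} {K : T.obj (T.obj M) ⟶ T.obj M} (hK : IsTorsionFree c K) :
    IsTorsionFree c' (transport α K) :=
  (doubleApp α M).comp_inv_comp_eq_of_comp_eq (hflip M) (by rw [← F.map_comp_assoc, hK])

lemma IsFlat.transport
    (hflip : ∀ N : C,
      F.map (c.app N) ≫ (doubleApp α N).hom = (doubleApp α N).hom ≫ c'.app (F.obj N))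
    {M : C} {K : T.obj (T.obj M) ⟶ T.obj M} (hK : IsFlat c K) :
    IsFlat c' (transport α K) := by
  unfold IsFlat
  rw [map_transport_comp_transport]
  exact (tripleApp α M).comp_inv_comp_eq_of_comp_eq (map_flip_comp_tripleApp_hom α hflip M)
    (by rw [← F.map_comp_assoc, hK])

end TangentConnection

open TangentConnection in
/-- Proposition 5.7: a strong morphism of tangent categories preserves torsion-freeness
and flatness of connections. -/
theorem stmt_5 {C D : Type*} [Category C] [Category D]
    (T : C ⥤ C) (S : D ⥤ D) (F : C ⥤ D)
    (α : T ⋙ F ≅ F ⋙ S)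
    (c : T ⋙ T ⟶ T ⋙ T) (c' : S ⋙ S ⟶ S ⋙ S)
    (hflip : ∀ N : C,
      F.map (c.app N) ≫ (α.hom.app (T.obj N) ≫ S.map (α.hom.app N))
        = (α.hom.app (T.obj N) ≫ S.map (α.hom.app N)) ≫ c'.app (F.obj N))
    (M : C) (K : T.obj (T.obj M) ⟶ T.obj M)
    (KF : S.obj (S.obj (F.obj M)) ⟶ S.obj (F.obj M))
    (hKF : KF = S.map (α.inv.app M) ≫ α.inv.app (T.obj M) ≫ F.map K ≫ α.hom.app M) :
    (c.app M ≫ K = K → c'.app (F.obj M) ≫ KF = KF) ∧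
    (c.app (T.obj M) ≫ T.map K ≫ K = T.map K ≫ K →
      c'.app (S.obj (F.obj M)) ≫ S.map KF ≫ KF = S.map KF ≫ KF) := by
  have hKF' : KF = transport α K := by simp [hKF, transport, doubleApp]
  subst hKF'
  exact ⟨IsTorsionFree.transport (α := α) hflip, IsFlat.transport (α := α) hflip⟩
end

section
/- Let 𝒞 and 𝒟 be categories, T : 𝒞 ⥤ 𝒞 and S : 𝒟 ⥤ 𝒟 endofunctors, F, G : 𝒞 ⥤ 𝒟 functors equipped with natural isomorphisms α with components α_N : F(TN) ≅ S(FN) and β with components β_N : G(TN) ≅ S(GN), and let φ : F ⟶ G be a natural transformation satisfying the tangent-transformation condition α_N ≫ S(φ_N) = φ_{TN} ≫ β_N for every object N. Then for every object M and every morphism K : T²M ⟶ TM, the component φ_M is connection-preserving from (FM, K_F) to (GM, K_G): K_F ≫ S(φ_M) = S²(φ_M) ≫ K_G, where K_F := (α_{TM} ≫ S(α_M))⁻¹ ≫ F(K) ≫ α_M and K_G := (β_{TM} ≫ S(β_M))⁻¹ ≫ G(K) ≫ β_M. (Lemma 5.10.) -/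
/- Both sides are the two boundary paths of a row of four commutative squares, pasted
horizontally: `S` applied to the inverse of the tangent square at `M`, the inverse of the
tangent square at `TM`, naturality of `φ` at `K`, and the tangent square at `M`. -/

open CategoryTheory

/-- Lemma 5.10: the component of a tangent transformation at any object with a connection
is connection-preserving between the transported connections. -/
theorem stmt_7 {C D : Type*} [Category C] [Category D]
    (T : C ⥤ C) (S : D ⥤ D) (F G : C ⥤ D)
    (α : T ⋙ F ≅ F ⋙ S) (β : T ⋙ G ≅ G ⋙ S)
    (φ : F ⟶ G)
    (hφ : ∀ N : C, α.hom.app N ≫ S.map (φ.app N) = φ.app (T.obj N) ≫ β.hom.app N)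
    (M : C) (K : T.obj (T.obj M) ⟶ T.obj M)
    (KF : S.obj (S.obj (F.obj M)) ⟶ S.obj (F.obj M))
    (hKF : KF = S.map (α.inv.app M) ≫ α.inv.app (T.obj M) ≫ F.map K ≫ α.hom.app M)
    (KG : S.obj (S.obj (G.obj M)) ⟶ S.obj (G.obj M))
    (hKG : KG = S.map (β.inv.app M) ≫ β.inv.app (T.obj M) ≫ G.map K ≫ β.hom.app M) :
    KF ≫ S.map (φ.app M) = S.map (S.map (φ.app M)) ≫ KG := by
  subst hKF hKG
  have tangent_sq (N : C) :
      CommSq (α.hom.app N) (φ.app (T.obj N)) (S.map (φ.app N)) (β.hom.app N) :=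
    ⟨hφ N⟩
  have tangent_sq_inv (N : C) :
      CommSq (α.inv.app N) (S.map (φ.app N)) (φ.app (T.obj N)) (β.inv.app N) :=
    (tangent_sq N).horiz_inv (f := α.app N) (i := β.app N)
  exact ((S.map_commSq (tangent_sq_inv M)).horiz_comp <| (tangent_sq_inv (T.obj M)).horiz_comp <|
    (CommSq.mk (φ.naturality K)).horiz_comp (tangent_sq M)).w
end

section
/- Let 𝒞 and 𝒟 be categories, T : 𝒞 ⥤ 𝒞, S : 𝒟 ⥤ 𝒟, F : 𝒞 ⥤ 𝒟 functors, α a natural isomorphism with components α_N : F(TN) ≅ S(FN), p : T ⟶ 𝟭_𝒞, p' : S ⟶ 𝟭_𝒟, ℓ : T ⟶ T∘T, ℓ' : S ⟶ S∘S natural transformations satisfying, for every object N, α_N ≫ p'_{FN} = F(p_N) and F(ℓ_N) ≫ α^{[2]}_N = α_N ≫ ℓ'_{FN}, where α^{[2]}_N := α_{TN} ≫ S(α_N). Let K : T²M ⟶ TM and K_F := (α^{[2]}_M)⁻¹ ≫ F(K) ≫ α_M. Then: (1) if ℓ_M ≫ K = 𝟙_{TM} then ℓ'_{FM} ≫ K_F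 = 𝟙_{S(FM)}; (2) if K ≫ p_M = p_{TM} ≫ p_M then K_F ≫ p'_{FM} = p'_{S(FM)} ≫ p'_{FM}. (Part of Proposition 5.5: the transported morphism K_F inherits the retraction and bundle-morphism equations of a vertical connection.) -/
open CategoryTheory

lemma comp_inv_comp_comp_hom_eq_id {C : Type*} [Category C] {A B A' B' : C}
    {i : A ⟶ B} {k : B ⟶ A} (hik : i ≫ k = 𝟙 A) (e : A ≅ A') (f : B ≅ B') {i' : A' ⟶ B'}
    (hi : i ≫ f.hom = e.hom ≫ i') : i' ≫ f.inv ≫ k ≫ e.hom = 𝟙 A' := by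
  have hi' : i' ≫ f.inv = e.inv ≫ i := by
    rw [Iso.comp_inv_eq, Category.assoc, hi, e.inv_hom_id_assoc]
  rw [reassoc_of% hi', reassoc_of% hik, e.inv_hom_id]

section Transport

variable {C D : Type*} [Category C] [Category D] {T : C ⥤ C} {S : D ⥤ D} {F : C ⥤ D}
  (α : T ⋙ F ≅ F ⋙ S)

/-- The comparison `α^{[2]}_N : F(T²N) ≅ S²(FN)`. -/
def doubleApp (N : C) : F.obj (T.obj (T.obj N)) ≅ S.obj (S.obj (F.obj N)) :=
  α.app (T.obj N) ≪≫ S.mapIso (α.app N)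

lemma doubleApp_inv (N : C) :
    (doubleApp α N).inv = S.map (α.inv.app N) ≫ α.inv.app (T.obj N) := rfl

variable {p : T ⟶ 𝟭 C} {p' : S ⟶ 𝟭 D}

lemma inv_app_comp_map_proj
    (hp : ∀ N : C, α.hom.app N ≫ p'.app (F.obj N) = F.map (p.app N)) (N : C) :
    α.inv.app N ≫ F.map (p.app N) = p'.app (F.obj N) := by
  rw [← hp, Iso.inv_hom_id_app_assoc]

lemma doubleApp_inv_comp_map_proj_comp_proj
    (hp : ∀ N : C, α.hom.app N ≫ p'.app (F.obj N) = F.map (p.app N)) (N : C) :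
    (doubleApp α N).inv ≫ F.map (p.app (T.obj N) ≫ p.app N)
      = p'.app (S.obj (F.obj N)) ≫ p'.app (F.obj N) := by
  have hnat : S.map (α.inv.app N) ≫ p'.app (F.obj (T.obj N))
      = p'.app (S.obj (F.obj N)) ≫ α.inv.app N := p'.naturality (α.inv.app N)
  rw [doubleApp_inv, F.map_comp, ← hp (T.obj N)]
  simp only [Category.assoc]
  rw [Iso.inv_hom_id_app_assoc, reassoc_of% hnat, inv_app_comp_map_proj α hp]

end Transport

/-- Part of Proposition 5.5: the transported morphism `K_F` inherits the retraction and
bundle-morphism equations of a vertical connection. -/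
theorem stmt_8 {C D : Type*} [Category C] [Category D]
    (T : C ⥤ C) (S : D ⥤ D) (F : C ⥤ D)
    (α : T ⋙ F ≅ F ⋙ S)
    (p : T ⟶ 𝟭 C) (p' : S ⟶ 𝟭 D)
    (l : T ⟶ T ⋙ T) (l' : S ⟶ S ⋙ S)
    (hp : ∀ N : C, α.hom.app N ≫ p'.app (F.obj N) = F.map (p.app N))
    (hl : ∀ N : C,
      F.map (l.app N) ≫ (α.hom.app (T.obj N) ≫ S.map (α.hom.app N))
        = α.hom.app N ≫ l'.app (F.obj N))
    (M : C) (K : T.obj (T.obj M) ⟶ T.obj M)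
    (KF : S.obj (S.obj (F.obj M)) ⟶ S.obj (F.obj M))
    (hKF : KF = S.map (α.inv.app M) ≫ α.inv.app (T.obj M) ≫ F.map K ≫ α.hom.app M) :
    (l.app M ≫ K = 𝟙 (T.obj M) → l'.app (F.obj M) ≫ KF = 𝟙 (S.obj (F.obj M))) ∧
    (K ≫ p.app M = p.app (T.obj M) ≫ p.app M →
      KF ≫ p'.app (F.obj M) = p'.app (S.obj (F.obj M)) ≫ p'.app (F.obj M)) := by
  rw [← Category.assoc, ← doubleApp_inv] at hKF
  subst hKF
  refine ⟨fun hlK => ?_, fun hKp => ?_⟩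
  · have hlK' : F.map (l.app M) ≫ F.map K = 𝟙 _ := by rw [← F.map_comp, hlK, F.map_id]
    exact comp_inv_comp_comp_hom_eq_id hlK' (α.app M) (doubleApp α M) (hl M)
  · rw [Category.assoc, Category.assoc, hp, ← F.map_comp, hKp,
      doubleApp_inv_comp_map_proj_comp_proj α hp]
end

section
/- Let 𝒞 and 𝒟 be categories, T : 𝒞 ⥤ 𝒞, S : 𝒟 ⥤ 𝒟, F : 𝒞 ⥤ 𝒟 functors, α a natural isomorphism with components α_N : F(TN) ≅ S(FN), and p : T ⟶ 𝟭_𝒞, p' : S ⟶ 𝟭_𝒟 natural transformations satisfying α_N ≫ p'_{FN} = F(p_N) for all N. Let M be an object of 𝒞 and K : T²M ⟶ TM a morphism such that the three morphisms T(p_M), p_{TM}, K : T²M ⟶ TM present T²M as a fibre product of three copies of p_M : TM ⟶ M, i.e. T(p_M) ≫ p_M = p_{TM} ≫ p_M = K ≫ p_M, and for every object X and morphisms g₁, g₂, g₃ : X ⟶ TM with g₁ ≫ p_M = g₂ ≫ p_M = g₃ ≫ p_M there is a unique h : X ⟶ T²M with h ≫ T(p_M) = g₁, h ≫ p_{TM}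 = g₂, h ≫ K = g₃. Suppose F preserves this fibre product, i.e. the morphisms F(T(p_M)), F(p_{TM}), F(K) : F(T²M) ⟶ F(TM) present F(T²M) as a fibre product of three copies of F(p_M). Then the morphisms S(p'_{FM}), p'_{S(FM)}, K_F : S²(FM) ⟶ S(FM), where K_F := (α_{TM} ≫ S(α_M))⁻¹ ≫ F(K) ≫ α_M, present S²(FM) as a fibre product of three copies of p'_{FM} : S(FM) ⟶ FM in 𝒟. (The fibre-product part of Proposition 5.5: a strong morphism of tangent categories sends connections to connections.) -/
/-!
Applying `F` to the presentation of `T²M` gives a presentation of `F(T²M)` over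
`F(p_M) = α_M ≫ p'_{FM}`. The isomorphisms `β = α_{TM} ≫ S(α_M) : F(T²M) ≅ S²(FM)` and
`α_M : F(TM) ≅ S(FM)` intertwine its legs `F(T p_M), F(p_{TM}), F(K)` with
`S(p'_{FM}), p'_{S(FM)}, K_F` (by naturality of `α` and `p'` and `α ≫ p' = F p`), and a
fibre-product presentation is invariant under such isomorphisms.
-/

open CategoryTheory

namespace CategoryTheory

variable {C : Type*} [Category C]

def IsTripleFiberProduct {X B P : C} (q : X ⟶ B) (π₁ π₂ π₃ : P ⟶ X) : Prop :=
  π₁ ≫ q = π₂ ≫ q ∧ π₂ ≫ q = π₃ ≫ q ∧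
    ∀ (Y : C) (g₁ g₂ g₃ : Y ⟶ X), g₁ ≫ q = g₂ ≫ q → g₂ ≫ q = g₃ ≫ q →
      ∃! h : Y ⟶ P, h ≫ π₁ = g₁ ∧ h ≫ π₂ = g₂ ∧ h ≫ π₃ = g₃

namespace IsTripleFiberProduct

variable {X B P : C} {q : X ⟶ B} {π₁ π₂ π₃ : P ⟶ X}

theorem iso_comp (hP : IsTripleFiberProduct q π₁ π₂ π₃) {P' : C} (φ : P' ≅ P) :
    IsTripleFiberProduct q (φ.hom ≫ π₁) (φ.hom ≫ π₂) (φ.hom ≫ π₃) := by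
  obtain ⟨h₁₂, h₂₃, hlim⟩ := hP
  refine ⟨by simp only [Category.assoc, h₁₂], by simp only [Category.assoc, h₂₃], ?_⟩
  intro Y g₁ g₂ g₃ hg₁₂ hg₂₃
  obtain ⟨h, hh, huniq⟩ := hlim Y g₁ g₂ g₃ hg₁₂ hg₂₃
  refine ⟨h ≫ φ.inv, by simpa only [Category.assoc, Iso.inv_hom_id_assoc] using hh, ?_⟩
  intro h' hh'
  rw [← huniq (h' ≫ φ.hom) (by simpa only [Category.assoc] using hh'), Category.assoc,
    Iso.hom_inv_id, Category.comp_id]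

theorem comp_iso {X' : C} (e : X ≅ X') {q' : X' ⟶ B}
    (hP : IsTripleFiberProduct (e.hom ≫ q') π₁ π₂ π₃) :
    IsTripleFiberProduct q' (π₁ ≫ e.hom) (π₂ ≫ e.hom) (π₃ ≫ e.hom) := by
  obtain ⟨h₁₂, h₂₃, hlim⟩ := hP
  refine ⟨by simpa only [Category.assoc] using h₁₂, by simpa only [Category.assoc] using h₂₃, ?_⟩
  intro Y g₁ g₂ g₃ hg₁₂ hg₂₃
  have hg : ∀ g : Y ⟶ X', (g ≫ e.inv) ≫ e.hom ≫ q' = g ≫ q' := fun g => by simp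
  obtain ⟨h, hh, huniq⟩ := hlim Y (g₁ ≫ e.inv) (g₂ ≫ e.inv) (g₃ ≫ e.inv)
    (by rw [hg, hg, hg₁₂]) (by rw [hg, hg, hg₂₃])
  simp only [Iso.eq_comp_inv, Category.assoc] at hh huniq
  exact ⟨h, by simpa only [← Category.assoc] using hh,
    fun h' hh' => huniq h' (by simpa only [← Category.assoc] using hh')⟩

theorem of_iso (hP : IsTripleFiberProduct q π₁ π₂ π₃) {X' P' : C} {q' : X' ⟶ B}
    {π₁' π₂' π₃' : P' ⟶ X'} (φ : P ≅ P') (e : X ≅ X') (hq : e.hom ≫ q' = q)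
    (h₁ : φ.hom ≫ π₁' = π₁ ≫ e.hom) (h₂ : φ.hom ≫ π₂' = π₂ ≫ e.hom)
    (h₃ : φ.hom ≫ π₃' = π₃ ≫ e.hom) :
    IsTripleFiberProduct q' π₁' π₂' π₃' := by
  rw [← Iso.eq_inv_comp] at h₁ h₂ h₃
  subst hq h₁ h₂ h₃
  exact (hP.comp_iso e).iso_comp φ.symm

end IsTripleFiberProduct

end CategoryTheory

theorem stmt_9_general {C D : Type*} [Category C] [Category D]
    (T : C ⥤ C) (S : D ⥤ D) (F : C ⥤ D)
    (α : T ⋙ F ≅ F ⋙ S)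
    (p : T ⟶ 𝟭 C) (p' : S ⟶ 𝟭 D)
    (hp : ∀ N : C, α.hom.app N ≫ p'.app (F.obj N) = F.map (p.app N))
    (M : C) (K : T.obj (T.obj M) ⟶ T.obj M)
    -- (T(p_M), p_{TM}, K) presents T²M as a fibre product of three copies of p_M
    (hcone1 : T.map (p.app M) ≫ p.app M = p.app (T.obj M) ≫ p.app M)
    (hcone2 : p.app (T.obj M) ≫ p.app M = K ≫ p.app M)
    -- F preserves this fibre product
    (hFlim : ∀ (Y : D) (g₁ g₂ g₃ : Y ⟶ F.obj (T.obj M)),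
      g₁ ≫ F.map (p.app M) = g₂ ≫ F.map (p.app M) →
      g₂ ≫ F.map (p.app M) = g₃ ≫ F.map (p.app M) →
      ∃! h : Y ⟶ F.obj (T.obj (T.obj M)),
        h ≫ F.map (T.map (p.app M)) = g₁ ∧ h ≫ F.map (p.app (T.obj M)) = g₂ ∧
          h ≫ F.map K = g₃)
    (KF : S.obj (S.obj (F.obj M)) ⟶ S.obj (F.obj M))
    (hKF : KF = S.map (α.inv.app M) ≫ α.inv.app (T.obj M) ≫ F.map K ≫ α.hom.app M) :
    -- (S(p'_{FM}), p'_{S(FM)}, K_F) presents S²(FM) as a fibre product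
    -- of three copies of p'_{FM}
    (S.map (p'.app (F.obj M)) ≫ p'.app (F.obj M)
        = p'.app (S.obj (F.obj M)) ≫ p'.app (F.obj M)) ∧
    (p'.app (S.obj (F.obj M)) ≫ p'.app (F.obj M) = KF ≫ p'.app (F.obj M)) ∧
    (∀ (Y : D) (g₁ g₂ g₃ : Y ⟶ S.obj (F.obj M)),
      g₁ ≫ p'.app (F.obj M) = g₂ ≫ p'.app (F.obj M) →
      g₂ ≫ p'.app (F.obj M) = g₃ ≫ p'.app (F.obj M) →
      ∃! h : Y ⟶ S.obj (S.obj (F.obj M)),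
        h ≫ S.map (p'.app (F.obj M)) = g₁ ∧ h ≫ p'.app (S.obj (F.obj M)) = g₂ ∧
          h ≫ KF = g₃) := by
  have hF : IsTripleFiberProduct (F.map (p.app M))
      (F.map (T.map (p.app M))) (F.map (p.app (T.obj M))) (F.map K) :=
    ⟨by rw [← F.map_comp, ← F.map_comp, hcone1], by rw [← F.map_comp, ← F.map_comp, hcone2],
      hFlim⟩
  let β : F.obj (T.obj (T.obj M)) ≅ S.obj (S.obj (F.obj M)) :=
    α.app (T.obj M) ≪≫ S.mapIso (α.app M)
  refine hF.of_iso β (α.app M) (hp M) ?_ ?_ ?_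
  · simp only [β, Iso.trans_hom, Iso.app_hom, Functor.mapIso_hom, Category.assoc,
      ← S.map_comp, hp]
    exact (α.hom.naturality (p.app M)).symm
  · simp only [β, Iso.trans_hom, Iso.app_hom, Functor.mapIso_hom, Category.assoc]
    rw [p'.naturality, ← hp, Category.assoc, Functor.id_map]
  · subst hKF
    simp [β, ← S.map_comp_assoc]

/-- The fibre-product part of Proposition 5.5: a strong morphism of tangent categories
sends connections to connections. -/
theorem stmt_9 {C D : Type*} [Category C] [Category D]
    (T : C ⥤ C) (S : D ⥤ D) (F : C ⥤ D)
    (α : T ⋙ F ≅ F ⋙ S)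
    (p : T ⟶ 𝟭 C) (p' : S ⟶ 𝟭 D)
    (hp : ∀ N : C, α.hom.app N ≫ p'.app (F.obj N) = F.map (p.app N))
    (M : C) (K : T.obj (T.obj M) ⟶ T.obj M)
    -- (T(p_M), p_{TM}, K) presents T²M as a fibre product of three copies of p_M
    (hcone1 : T.map (p.app M) ≫ p.app M = p.app (T.obj M) ≫ p.app M)
    (hcone2 : p.app (T.obj M) ≫ p.app M = K ≫ p.app M)
    (hlim : ∀ (X : C) (g₁ g₂ g₃ : X ⟶ T.obj M),
      g₁ ≫ p.app M = g₂ ≫ p.app M → g₂ ≫ p.app M = g₃ ≫ p.app M →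
      ∃! h : X ⟶ T.obj (T.obj M),
        h ≫ T.map (p.app M) = g₁ ∧ h ≫ p.app (T.obj M) = g₂ ∧ h ≫ K = g₃)
    -- F preserves this fibre product
    (hFlim : ∀ (Y : D) (g₁ g₂ g₃ : Y ⟶ F.obj (T.obj M)),
      g₁ ≫ F.map (p.app M) = g₂ ≫ F.map (p.app M) →
      g₂ ≫ F.map (p.app M) = g₃ ≫ F.map (p.app M) →
      ∃! h : Y ⟶ F.obj (T.obj (T.obj M)),
        h ≫ F.map (T.map (p.app M)) = g₁ ∧ h ≫ F.map (p.app (T.obj M)) = g₂ ∧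
          h ≫ F.map K = g₃)
    (KF : S.obj (S.obj (F.obj M)) ⟶ S.obj (F.obj M))
    (hKF : KF = S.map (α.inv.app M) ≫ α.inv.app (T.obj M) ≫ F.map K ≫ α.hom.app M) :
    -- (S(p'_{FM}), p'_{S(FM)}, K_F) presents S²(FM) as a fibre product
    -- of three copies of p'_{FM}
    (S.map (p'.app (F.obj M)) ≫ p'.app (F.obj M)
        = p'.app (S.obj (F.obj M)) ≫ p'.app (F.obj M)) ∧
    (p'.app (S.obj (F.obj M)) ≫ p'.app (F.obj M) = KF ≫ p'.app (F.obj M)) ∧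
    (∀ (Y : D) (g₁ g₂ g₃ : Y ⟶ S.obj (F.obj M)),
      g₁ ≫ p'.app (F.obj M) = g₂ ≫ p'.app (F.obj M) →
      g₂ ≫ p'.app (F.obj M) = g₃ ≫ p'.app (F.obj M) →
      ∃! h : Y ⟶ S.obj (S.obj (F.obj M)),
        h ≫ S.map (p'.app (F.obj M)) = g₁ ∧ h ≫ p'.app (S.obj (F.obj M)) = g₂ ∧
          h ≫ KF = g₃) :=
  stmt_9_general T S F α p p' hp M K hcone1 hcone2 hFlim KF hKF
end
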